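/- Let X, X̃ be random elements of a Polish space E, φ : E → ℝ measurable, and p, q, r ∈ [1, ∞) with 1/q + 1/r = 1. With μ, μ̃ the laws of X, X̃ respectively, we have E[|φ(X̃)|^p]^{1/p} ≤ E[|φ(X)|^p]^{1/p} + ‖μ - μ̃‖_tv^{1/(pq)} ( E[|φ(X)|^{pr}]^{1/(pr)} + E[|φ(X̃)|^{pr}]^{1/(pr)} ). -/

import Mathlib

/-!
In place of a maximal coupling, the Hahn decomposition of `ν - μ` gives a measure `η ≤ ν` of mass
at most `‖μ - ν‖_tv` with `ν ≤ μ + η`. Hence `∫ f dν ≤ ∫ f dμ + ∫ f dη`, Hölder's inequality on `η`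
bounds the last term by `η(E)^{1/q} ‖f‖_{L^r(ν)}`, and subadditivity of `t ↦ t^{1/p}` concludes
with `f = |φ|^p`.
-/

open MeasureTheory

noncomputable def tvDist {E : Type*} [MeasurableSpace E] (μ ν : Measure E) : ℝ :=
  ⨆ A : {A : Set E // MeasurableSet A}, |(μ A.1).toReal - (ν A.1).toReal|

section

open Set

variable {α : Type*} [MeasurableSpace α]

theorem tvDist_nonneg (μ ν : Measure α) : 0 ≤ tvDist μ ν :=
  Real.iSup_nonneg fun _ => abs_nonneg _

theorem abs_toReal_sub_le_tvDist {μ ν : Measure α} [IsFiniteMeasure μ] [IsFiniteMeasure ν]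
    {A : Set α} (hA : MeasurableSet A) : |(μ A).toReal - (ν A).toReal| ≤ tvDist μ ν := by
  refine le_ciSup (f := fun B : {A : Set α // MeasurableSet A} => |(μ B.1).toReal - (ν B.1).toReal|)
    ?_ ⟨A, hA⟩
  refine ⟨(μ univ).toReal + (ν univ).toReal, forall_mem_range.2 fun B => ?_⟩
  refine (abs_sub _ _).trans ?_
  rw [abs_of_nonneg ENNReal.toReal_nonneg, abs_of_nonneg ENNReal.toReal_nonneg]
  exact add_le_add (ENNReal.toReal_mono (measure_ne_top _ _) (measure_mono (subset_univ _)))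
    (ENNReal.toReal_mono (measure_ne_top _ _) (measure_mono (subset_univ _)))

theorem exists_le_le_add_measureReal_univ_le_tvDist (μ ν : Measure α) [IsFiniteMeasure μ]
    [IsFiniteMeasure ν] : ∃ η ≤ ν, ν ≤ μ + η ∧ η.real univ ≤ tvDist μ ν := by
  obtain ⟨s, hs, hνμ, hμν⟩ := hahn_decomposition μ ν
  have hνμ' : ν.restrict s ≤ μ.restrict s := Measure.le_iff.2 fun t ht => by
    simpa only [Measure.restrict_apply ht] using hνμ _ (ht.inter hs) inter_subset_right
  have hμν' : μ.restrict sᶜ ≤ ν.restrict sᶜ := Measure.le_iff.2 fun t ht => by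
    simpa only [Measure.restrict_apply ht] using hμν _ (ht.inter hs.compl) inter_subset_right
  set η := ν.restrict sᶜ - μ.restrict sᶜ
  refine ⟨η, Measure.sub_le.trans Measure.restrict_le_self, ?_, ?_⟩
  · calc ν = ν.restrict s + (η + μ.restrict sᶜ) := by
          rw [Measure.sub_add_cancel_of_le hμν', Measure.restrict_add_restrict_compl hs]
      _ ≤ μ.restrict s + (η + μ.restrict sᶜ) := by gcongr
      _ = μ + η := by rw [add_comm η, ← add_assoc, Measure.restrict_add_restrict_compl hs]
  · rw [measureReal_def, Measure.sub_apply MeasurableSet.univ hμν', Measure.restrict_apply_univ,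
      Measure.restrict_apply_univ,
      ENNReal.toReal_sub_of_le (hμν _ hs.compl le_rfl) (measure_ne_top _ _)]
    exact (le_abs_self _).trans ((abs_sub_comm _ _).trans_le (abs_toReal_sub_le_tvDist hs.compl))

theorem memLp_of_integrable_rpow {μ : Measure α} {f : α → ℝ} (hf : AEStronglyMeasurable f μ)
    (hf0 : 0 ≤ f) {r : ℝ} (hr : 0 < r) (h : Integrable (fun x => f x ^ r) μ) :
    MemLp f (ENNReal.ofReal r) μ := by
  refine (integrable_norm_rpow_iff hf (by simpa using hr) ENNReal.ofReal_ne_top).1 ?_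
  simpa only [ENNReal.toReal_ofReal hr.le, Real.norm_of_nonneg (hf0 _)] using h

theorem integral_le_integral_add_measureReal_univ_rpow_mul {μ ν η : Measure α}
    [IsFiniteMeasure ν] (hην : η ≤ ν) (hνμη : ν ≤ μ + η) {f : α → ℝ}
    (hf : AEStronglyMeasurable f ν) (hf0 : 0 ≤ f) {q r : ℝ} (hrq : r.HolderConjugate q)
    (hfμ : Integrable f μ) (hfν : Integrable (fun x => f x ^ r) ν) :
    ∫ x, f x ∂ν ≤ ∫ x, f x ∂μ + η.real univ ^ (1 / q) * (∫ x, f x ^ r ∂ν) ^ (1 / r) := by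
  have : IsFiniteMeasure η := isFiniteMeasure_of_le ν hην
  have hfη : MemLp f (ENNReal.ofReal r) η :=
    memLp_of_integrable_rpow (hf.mono_measure hην) hf0 hrq.pos (hfν.mono_measure hην)
  have hfη' : Integrable f η := hfη.integrable (by simpa using hrq.lt.le)
  have holder : ∫ x, f x ∂η ≤ (∫ x, f x ^ r ∂η) ^ (1 / r) * η.real univ ^ (1 / q) := by
    simpa using integral_mul_le_Lp_mul_Lq_of_nonneg hrq (ae_of_all _ hf0)
      (ae_of_all _ fun _ => zero_le_one) hfη (memLp_const (1 : ℝ))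
  have hfr0 : 0 ≤ fun x => f x ^ r := fun x => Real.rpow_nonneg (hf0 x) r
  have hη_le_ν : ∫ x, f x ^ r ∂η ≤ ∫ x, f x ^ r ∂ν :=
    integral_mono_measure hην (ae_of_all _ hfr0) hfν
  calc ∫ x, f x ∂ν ≤ ∫ x, f x ∂(μ + η) :=
        integral_mono_measure hνμη (ae_of_all _ hf0) (hfμ.add_measure hfη')
    _ = ∫ x, f x ∂μ + ∫ x, f x ∂η := integral_add_measure hfμ hfη'
    _ ≤ ∫ x, f x ∂μ + η.real univ ^ (1 / q) * (∫ x, f x ^ r ∂ν) ^ (1 / r) := by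
        rw [mul_comm]
        gcongr
        refine holder.trans (mul_le_mul_of_nonneg_right ?_ (Real.rpow_nonneg measureReal_nonneg _))
        exact Real.rpow_le_rpow (integral_nonneg hfr0) hη_le_ν hrq.one_div_nonneg

theorem integral_abs_rpow_rpow_le_add_tvDist_rpow_mul {μ ν : Measure α} [IsFiniteMeasure μ]
    [IsFiniteMeasure ν] {h : α → ℝ} (hh : Measurable h) {p q r : ℝ} (hp : 1 ≤ p)
    (hrq : r.HolderConjugate q) (hμ : Integrable (fun x => |h x| ^ (p * r)) μ)
    (hν : Integrable (fun x => |h x| ^ (p * r)) ν) :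
    (∫ x, |h x| ^ p ∂ν) ^ (1 / p) ≤ (∫ x, |h x| ^ p ∂μ) ^ (1 / p) +
      tvDist μ ν ^ (1 / (p * q)) * (∫ x, |h x| ^ (p * r) ∂ν) ^ (1 / (p * r)) := by
  obtain ⟨η, hην, hνμη, hη⟩ := exists_le_le_add_measureReal_univ_le_tvDist μ ν
  set f := fun x => |h x| ^ p
  have hf : Measurable f := hh.abs.pow_const p
  have hf0 : 0 ≤ f := fun x => by positivity
  have hfr : (fun x => f x ^ r) = fun x => |h x| ^ (p * r) :=
    funext fun x => (Real.rpow_mul (abs_nonneg _) p r).symm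
  have hfμ : Integrable f μ :=
    (memLp_of_integrable_rpow hf.aestronglyMeasurable hf0 hrq.pos (hfr ▸ hμ)).integrable
      (by simpa using hrq.lt.le)
  have key := integral_le_integral_add_measureReal_univ_rpow_mul hην hνμη
    hf.aestronglyMeasurable hf0 hrq hfμ (hfr ▸ hν)
  rw [hfr] at key
  have hp0 : 0 < p := zero_lt_one.trans_le hp
  calc (∫ x, f x ∂ν) ^ (1 / p)
      ≤ (∫ x, f x ∂μ + η.real univ ^ (1 / q) * (∫ x, |h x| ^ (p * r) ∂ν) ^ (1 / r))
          ^ (1 / p) := Real.rpow_le_rpow (integral_nonneg hf0) key (by positivity)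
    _ ≤ (∫ x, f x ∂μ) ^ (1 / p) +
          (η.real univ ^ (1 / q) * (∫ x, |h x| ^ (p * r) ∂ν) ^ (1 / r)) ^ (1 / p) :=
        Real.rpow_add_le_add_rpow (integral_nonneg hf0) (by positivity) (by positivity)
          (by rw [div_le_one hp0]; exact hp)
    _ = (∫ x, f x ∂μ) ^ (1 / p) +
          η.real univ ^ (1 / (p * q)) * (∫ x, |h x| ^ (p * r) ∂ν) ^ (1 / (p * r)) := by
        rw [Real.mul_rpow (by positivity) (by positivity), ← Real.rpow_mul measureReal_nonneg,
          ← Real.rpow_mul (integral_nonneg fun _ => by positivity), one_div_mul_one_div_rev,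
          one_div_mul_one_div_rev]
    _ ≤ _ := by gcongr; exact div_nonneg zero_le_one (mul_pos hp0 hrq.symm.pos).le

end

theorem stmt_5_general {Ω E : Type*} [MeasurableSpace Ω] [MeasurableSpace E]
    (ℙ : Measure Ω) [IsProbabilityMeasure ℙ]
    (X Xt : Ω → E) (hX : Measurable X) (hXt : Measurable Xt)
    (φ : E → ℝ) (hφ : Measurable φ)
    (p q r : ℝ) (hp : 1 ≤ p) (hq : 1 ≤ q) (hr : 1 ≤ r) (hqr : 1 / q + 1 / r = 1)
    (hIX : Integrable (fun ω => |φ (X ω)| ^ (p * r)) ℙ)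
    (hIXt : Integrable (fun ω => |φ (Xt ω)| ^ (p * r)) ℙ) :
    (∫ ω, |φ (Xt ω)| ^ p ∂ℙ) ^ (1 / p) ≤
      (∫ ω, |φ (X ω)| ^ p ∂ℙ) ^ (1 / p) +
        tvDist (Measure.map X ℙ) (Measure.map Xt ℙ) ^ (1 / (p * q)) *
          ((∫ ω, |φ (X ω)| ^ (p * r) ∂ℙ) ^ (1 / (p * r)) +
            (∫ ω, |φ (Xt ω)| ^ (p * r) ∂ℙ) ^ (1 / (p * r))) := by
  have hrq : r.HolderConjugate q := by
    refine Real.holderConjugate_iff.2 ⟨?_, by rwa [inv_eq_one_div, inv_eq_one_div, add_comm]⟩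
    have : 0 < 1 / q := by positivity
    exact (div_lt_one (by positivity)).1 (by linarith)
  have hm (s : ℝ) : Measurable fun x => |φ x| ^ s := hφ.abs.pow_const s
  have key := integral_abs_rpow_rpow_le_add_tvDist_rpow_mul (μ := ℙ.map X) (ν := ℙ.map Xt) hφ hp
    hrq ((integrable_map_measure (hm _).aestronglyMeasurable hX.aemeasurable).2 hIX)
    ((integrable_map_measure (hm _).aestronglyMeasurable hXt.aemeasurable).2 hIXt)
  simp only [integral_map hX.aemeasurable (hm _).aestronglyMeasurable,
    integral_map hXt.aemeasurable (hm _).aestronglyMeasurable] at key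
  refine key.trans (add_le_add_right (mul_le_mul_of_nonneg_left (le_add_of_nonneg_left ?_) ?_) _)
  · positivity
  · exact Real.rpow_nonneg (tvDist_nonneg _ _) _

/-- Coupling moment-transfer inequality: for random elements `X, X̃` of a Polish space,
a measurable `φ : E → ℝ`, and `p, q, r ∈ [1, ∞)` with `1/q + 1/r = 1`,
`E[|φ(X̃)|^p]^{1/p} ≤ E[|φ(X)|^p]^{1/p}
   + ‖μ - μ̃‖_tv^{1/(pq)} (E[|φ(X)|^{pr}]^{1/(pr)} + E[|φ(X̃)|^{pr}]^{1/(pr)})`. -/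
theorem stmt_5 {Ω E : Type*} [MeasurableSpace Ω]
    [TopologicalSpace E] [PolishSpace E] [MeasurableSpace E] [BorelSpace E]
    (ℙ : Measure Ω) [IsProbabilityMeasure ℙ]
    (X Xt : Ω → E) (hX : Measurable X) (hXt : Measurable Xt)
    (φ : E → ℝ) (hφ : Measurable φ)
    (p q r : ℝ) (hp : 1 ≤ p) (hq : 1 ≤ q) (hr : 1 ≤ r) (hqr : 1 / q + 1 / r = 1)
    (hIX : Integrable (fun ω => |φ (X ω)| ^ (p * r)) ℙ)
    (hIXt : Integrable (fun ω => |φ (Xt ω)| ^ (p * r)) ℙ) :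
    (∫ ω, |φ (Xt ω)| ^ p ∂ℙ) ^ (1 / p) ≤
      (∫ ω, |φ (X ω)| ^ p ∂ℙ) ^ (1 / p) +
        tvDist (Measure.map X ℙ) (Measure.map Xt ℙ) ^ (1 / (p * q)) *
          ((∫ ω, |φ (X ω)| ^ (p * r) ∂ℙ) ^ (1 / (p * r)) +
            (∫ ω, |φ (Xt ω)| ^ (p * r) ∂ℙ) ^ (1 / (p * r))) :=
  stmt_5_general ℙ X Xt hX hXt φ hφ p q r hp hq hr hqr hIX hIXt
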